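/- arXiv:2010.13328 — 3 statements merged into one kernel-verified Lean document; each statement's English description precedes it below -/
import Mathlib

section
/- For every finite σ-structure A, the tree-depth of A equals the least k > 0 such that there exists an E_k-coalgebra on A (the E-coalgebra number of A). -/
/-- A relational signature: a set of relation symbols with arities. -/
structure Signature where
  symbols : Type
  arity : symbols → ℕ

/-- A relational structure for a signature `σ`. -/
structure Struct (σ : Signature) where
  carrier : Type
  rel : ∀ r : σ.symbols, (Fin (σ.arity r) → carrier) → Prop

/-- Homomorphisms of relational structures. -/
def IsHom {σ : Signature} (A B : Struct σ) (f : A.carrier → B.carrier) : Prop :=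
  ∀ r x, A.rel r x → B.rel r (fun i => f (x i))

/-- Nonempty sequences of length at most `k`. -/
def NESeq (A : Type) (k : ℕ) : Type := { l : List A // l ≠ [] ∧ l.length ≤ k }

/-- The last element of a nonempty sequence (the counit of the EF comonad). -/
def lastOf {A : Type} {k : ℕ} (s : NESeq A k) : A := s.1.getLast s.2.1

/-- Co-Kleisli coextension for the EF comonad: `f*[a₁,…,a_j] = [f[a₁],…,f[a₁,…,a_j]]`. -/
def coext {A B : Type} {k : ℕ} (f : NESeq A k → B) (s : NESeq A k) : NESeq B k :=
  ⟨(List.finRange s.1.length).map fun i =>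
      f ⟨s.1.take (i.1 + 1), by
        have h1 := i.2
        have h2 := s.2.2
        constructor
        · apply List.ne_nil_of_length_pos
          simp [List.length_take] <;> omega
        · simp [List.length_take]; omega⟩, by
    have h1 := s.2.1
    have h2 := s.2.2
    constructor
    · apply List.ne_nil_of_length_pos
      simpa [List.length_pos_iff] using h1
    · simpa using h2⟩

/-- The Ehrenfeucht–Fraïssé comonad on structures: the universe of `EF k A` consists of
nonempty sequences of length ≤ k over `A`, and a relation holds of a tuple of sequences
iff they are pairwise prefix-comparable and the relation holds in `A` of their last
elements. -/
def EF {σ : Signature} (k : ℕ) (A : Struct σ) : Struct σ where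
  carrier := NESeq A.carrier k
  rel r x := (∀ i j, (x i).1 <+: (x j).1 ∨ (x j).1 <+: (x i).1) ∧
    A.rel r (fun i => lastOf (x i))

/-- The Gaifman graph of a structure. -/
def gaifman {σ : Signature} (A : Struct σ) (a a' : A.carrier) : Prop :=
  a ≠ a' ∧ ∃ (r : σ.symbols) (x : Fin (σ.arity r) → A.carrier) (i j : Fin (σ.arity r)),
    A.rel r x ∧ x i = a ∧ x j = a' ∧ i ≠ j

/-- `α : A → E_k A` is a coalgebra for the EF comonad: it is a homomorphism satisfying
the counit and comultiplication laws. -/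
def IsEFCoalg {σ : Signature} (k : ℕ) (A : Struct σ) (α : A.carrier → NESeq A.carrier k) : Prop :=
  IsHom A (EF k A) α ∧
  (∀ a, lastOf (α a) = a) ∧
  (∀ (a : A.carrier) (i : ℕ) (h : i < (α a).1.length),
      (α ((α a).1.get ⟨i, h⟩)).1 = (α a).1.take (i + 1))

/-- A forest cover of height ≤ k of a graph `(V, adj)`: a forest order in which the
predecessors of any element form a chain of size ≤ k, and adjacent vertices are
comparable. -/
structure ForestCover (V : Type) (adj : V → V → Prop) (k : ℕ) where
  le : V → V → Prop
  le_refl : ∀ a, le a a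
  le_antisymm : ∀ a b, le a b → le b a → a = b
  le_trans : ∀ a b c, le a b → le b c → le a c
  pred_chain : ∀ a b c, le b a → le c a → le b c ∨ le c b
  pred_finite : ∀ a, {b | le b a}.Finite
  height : ∀ a, {b | le b a}.ncard ≤ k
  cover : ∀ a b, adj a b → le a b ∨ le b a

/-- The tree-depth of a structure: the minimum height of a forest cover of its Gaifman
graph. -/
noncomputable def treeDepth {σ : Signature} (A : Struct σ) : ℕ :=
  sInf {k | Nonempty (ForestCover A.carrier (gaifman A) k)}

/-!
A forest cover of height `≤ k` gives an `E_k`-coalgebra by sending each vertex to the chain of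
its ancestors listed from the root down, i.e. ordered by rank (the number of ancestors);
adjacent vertices are comparable, so their chains are prefix-comparable. Conversely a
coalgebra `α` induces the forest order `a ≤ b ↔ α a <+: α b`: the counit law makes `α`
injective, so the ancestors of `b` are told apart by the lengths of their images, which lie
in `[1, k]`, and the homomorphism condition makes Gaifman-adjacent elements comparable.
-/

namespace ForestCover

variable {V : Type} {adj : V → V → Prop} {k : ℕ} (F : ForestCover V adj k)

noncomputable def rank (a : V) : ℕ := {b | F.le b a}.ncard

lemma rank_pos (a : V) : 0 < F.rank a :=
  (Set.ncard_pos (F.pred_finite a)).mpr ⟨a, F.le_refl a⟩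

lemma pos_of_nonempty (F : ForestCover V adj k) [Nonempty V] : 0 < k :=
  (F.rank_pos (Classical.arbitrary V)).trans_le (F.height _)

lemma rank_mono {a b : V} (h : F.le b a) : F.rank b ≤ F.rank a :=
  Set.ncard_le_ncard (fun c hc => F.le_trans c b a hc h) (F.pred_finite a)

lemma rank_lt_rank {a b : V} (h : F.le b a) (hne : b ≠ a) : F.rank b < F.rank a :=
  Set.ncard_lt_ncard ⟨fun c hc => F.le_trans c b a hc h,
    fun hsub => hne (F.le_antisymm b a h (hsub (F.le_refl a)))⟩ (F.pred_finite a)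

lemma rank_injOn (a : V) : Set.InjOn F.rank {b | F.le b a} := by
  intro b hb c hc h
  by_contra hne
  rcases F.pred_chain a b c hb hc with hbc | hcb
  · exact (F.rank_lt_rank hbc hne).ne h
  · exact (F.rank_lt_rank hcb (Ne.symm hne)).ne h.symm

lemma rank_image_ancestors (a : V) : F.rank '' {b | F.le b a} = Set.Icc 1 (F.rank a) := by
  refine Set.eq_of_subset_of_ncard_le ?_ ?_ (Set.finite_Icc _ _)
  · rintro _ ⟨b, hb, rfl⟩
    exact ⟨F.rank_pos b, F.rank_mono hb⟩
  · rw [(F.rank_injOn a).ncard_image, Set.ncard_Icc_nat]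
    simp [rank]

/-- The ancestor of `a` of rank `m`; meaningful for `1 ≤ m ≤ rank a`. -/
noncomputable def ancestor (a : V) (m : ℕ) : V :=
  open Classical in
  if h : ∃ b, F.le b a ∧ F.rank b = m then h.choose else a

lemma ancestor_spec {a : V} {m : ℕ} (h0 : 0 < m) (hm : m ≤ F.rank a) :
    F.le (F.ancestor a m) a ∧ F.rank (F.ancestor a m) = m := by
  have h : ∃ b, F.le b a ∧ F.rank b = m := by
    have hm : m ∈ Set.Icc 1 (F.rank a) := ⟨h0, hm⟩
    rwa [← F.rank_image_ancestors a] at hm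
  rw [ancestor, dif_pos h]
  exact h.choose_spec

lemma ancestor_rank_self (a : V) : F.ancestor a (F.rank a) = a :=
  have s := F.ancestor_spec (F.rank_pos a) le_rfl
  F.rank_injOn a s.1 (F.le_refl a) s.2

lemma ancestor_eq_of_le {a b : V} (h : F.le b a) {m : ℕ} (h0 : 0 < m) (hm : m ≤ F.rank b) :
    F.ancestor b m = F.ancestor a m :=
  have sb := F.ancestor_spec h0 hm
  have sa := F.ancestor_spec h0 (hm.trans (F.rank_mono h))
  F.rank_injOn a (F.le_trans _ _ _ sb.1 h) sa.1 (sb.2.trans sa.2.symm)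

noncomputable def ancestorList (a : V) : List V :=
  (List.range (F.rank a)).map fun i => F.ancestor a (i + 1)

@[simp]
lemma length_ancestorList (a : V) : (F.ancestorList a).length = F.rank a := by
  simp [ancestorList]

@[simp]
lemma getElem_ancestorList (a : V) {i : ℕ} (h : i < (F.ancestorList a).length) :
    (F.ancestorList a)[i] = F.ancestor a (i + 1) := by
  simp [ancestorList]

lemma ancestorList_eq_take {a b : V} (h : F.le b a) :
    F.ancestorList b = (F.ancestorList a).take (F.rank b) := by
  apply List.ext_getElem
  · simpa using F.rank_mono h
  · intro i hb _
    simp only [getElem_ancestorList, List.getElem_take]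
    exact F.ancestor_eq_of_le h i.succ_pos (by simpa using hb)

lemma ancestorList_prefix_or_prefix {a b : V} (h : F.le a b ∨ F.le b a) :
    F.ancestorList a <+: F.ancestorList b ∨ F.ancestorList b <+: F.ancestorList a := by
  rcases h with hab | hba
  · exact .inl (F.ancestorList_eq_take hab ▸ List.take_prefix _ _)
  · exact .inr (F.ancestorList_eq_take hba ▸ List.take_prefix _ _)

noncomputable def ancestorSeq (a : V) : NESeq V k :=
  ⟨F.ancestorList a, List.ne_nil_of_length_pos (by simpa using F.rank_pos a),
    by rw [length_ancestorList]; exact F.height a⟩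

@[simp]
lemma ancestorSeq_val (a : V) : (F.ancestorSeq a).1 = F.ancestorList a := rfl

lemma lastOf_ancestorSeq (a : V) : lastOf (F.ancestorSeq a) = a := by
  simp [lastOf, List.getLast_eq_getElem, Nat.sub_add_cancel (F.rank_pos a),
    ancestor_rank_self]

end ForestCover

lemma ForestCover.isEFCoalg_ancestorSeq {σ : Signature} {A : Struct σ} {k : ℕ}
    (F : ForestCover A.carrier (gaifman A) k) : IsEFCoalg k A F.ancestorSeq := by
  refine ⟨fun r x hx => ⟨fun i j => ?_, ?_⟩, F.lastOf_ancestorSeq, fun a i h => ?_⟩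
  · simp only [ForestCover.ancestorSeq_val]
    by_cases hij : x i = x j
    · exact .inl (hij ▸ List.prefix_refl _)
    · exact F.ancestorList_prefix_or_prefix
        (F.cover _ _ ⟨hij, r, x, i, j, hx, rfl, rfl, fun h => hij (h ▸ rfl)⟩)
  · simpa only [F.lastOf_ancestorSeq] using hx
  · have hi : i < F.rank a := by simpa using h
    have s := F.ancestor_spec i.succ_pos hi
    simp only [ForestCover.ancestorSeq_val, List.get_eq_getElem, F.getElem_ancestorList]
    rw [F.ancestorList_eq_take s.1, s.2]

lemma NESeq.length_mem_Icc {X : Type} {k : ℕ} (s : NESeq X k) : s.1.length ∈ Set.Icc 1 k :=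
  ⟨List.length_pos_iff.mpr s.2.1, s.2.2⟩

namespace IsEFCoalg

variable {σ : Signature} {A : Struct σ} {k : ℕ} {α : A.carrier → NESeq A.carrier k}

lemma injective (hα : IsEFCoalg k A α) : Function.Injective α := fun a b h => by
  rw [← hα.2.1 a, ← hα.2.1 b, h]

lemma length_injOn_prefixes (hα : IsEFCoalg k A α) (a : A.carrier) :
    Set.InjOn (fun b => (α b).1.length) {b | (α b).1 <+: (α a).1} := fun _ hb _ hc h =>
  hα.injective (Subtype.ext ((List.prefix_of_prefix_length_le hb hc h.le).eq_of_length h))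

lemma prefix_or_prefix_of_gaifman (hα : IsEFCoalg k A α) {a b : A.carrier}
    (h : gaifman A a b) : (α a).1 <+: (α b).1 ∨ (α b).1 <+: (α a).1 := by
  obtain ⟨-, r, x, i, j, hr, rfl, rfl, -⟩ := h
  exact (hα.1 r x hr).1 i j

def toForestCover (hα : IsEFCoalg k A α) : ForestCover A.carrier (gaifman A) k where
  le a b := (α a).1 <+: (α b).1
  le_refl _ := List.prefix_refl _
  le_antisymm a b hab hba :=
    hα.injective (Subtype.ext (hab.eq_of_length (hab.length_le.antisymm hba.length_le)))
  le_trans _ _ _ := List.IsPrefix.trans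
  pred_chain _ _ _ := List.prefix_or_prefix_of_prefix
  pred_finite a :=
    Set.Finite.of_injOn (fun b _ => (α b).length_mem_Icc) (hα.length_injOn_prefixes a)
      (Set.finite_Icc 1 k)
  height a := by
    simpa using Set.ncard_le_ncard_of_injOn _ (fun b _ => (α b).length_mem_Icc)
      (hα.length_injOn_prefixes a) (Set.finite_Icc 1 k)
  cover _ _ := hα.prefix_or_prefix_of_gaifman

end IsEFCoalg

theorem treeDepth_eq_coalgebraNumber_general
    (σ : Signature) (A : Struct σ) [Nonempty A.carrier] :
    treeDepth A = sInf {k | 0 < k ∧ ∃ α : A.carrier → NESeq A.carrier k, IsEFCoalg k A α} := by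
  unfold treeDepth
  congr 1
  ext k
  constructor
  · rintro ⟨F⟩
    exact ⟨F.pos_of_nonempty, F.ancestorSeq, F.isEFCoalg_ancestorSeq⟩
  · rintro ⟨-, α, hα⟩
    exact ⟨hα.toForestCover⟩

/-- For every finite (nonempty) structure `A`, the tree-depth of `A`
equals the least `k > 0` such that an `E_k`-coalgebra exists on `A`. -/
theorem treeDepth_eq_coalgebraNumber
    (σ : Signature) (A : Struct σ) [Fintype A.carrier] [Nonempty A.carrier] :
    treeDepth A = sInf {k | 0 < k ∧ ∃ α : A.carrier → NESeq A.carrier k, IsEFCoalg k A α} :=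
  treeDepth_eq_coalgebraNumber_general σ A
end

section
/- For every finite σ-structure A, the tree-width of A equals κ^P(A) − 1, where κ^P(A) is the least k such that there exists a P_k-coalgebra on A, P_k being the k-pebbling comonad. -/
/-- The universe of the pebbling comonad: finite nonempty sequences of moves
`(pebble index, element)`. -/
def Peb (A : Type) (k : ℕ) : Type := { l : List (Fin k × A) // l ≠ [] }

/-- Last element of a pebbling play. -/
def lastP {A : Type} {k : ℕ} (s : Peb A k) : Fin k × A := s.1.getLast s.2

/-- The pebbling compatibility condition on a pair of plays: they are
prefix-comparable, and the pebble index of the last move of the shorter one does not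
reappear in the suffix extending it to the longer one. -/
def pebCond {A : Type} {k : ℕ} (s t : List (Fin k × A)) : Prop :=
  (s <+: t ∧ ∀ m ∈ t.drop s.length, s.getLast?.map Prod.fst ≠ some m.1) ∨
  (t <+: s ∧ ∀ m ∈ s.drop t.length, t.getLast?.map Prod.fst ≠ some m.1)

/-- The pebbling comonad on structures: `P_k A` has universe the finite nonempty
sequences over `{1,…,k} × A`; a relation holds of a tuple of plays iff they are
pairwise prefix-comparable satisfying the pebbling condition, and the relation holds in
`A` of their last elements. -/
def PebStruct {σ : Signature} (k : ℕ) (A : Struct σ) : Struct σ where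
  carrier := Peb A.carrier k
  rel r x := (∀ i j, pebCond (x i).1 (x j).1) ∧ A.rel r (fun i => (lastP (x i)).2)

/-- Co-Kleisli coextension for the pebbling comonad. -/
def coextP {A B : Type} {k : ℕ} (f : Peb A k → B) (s : Peb A k) : Peb B k :=
  ⟨(List.finRange s.1.length).map fun i =>
      ((s.1.get i).1, f ⟨s.1.take (i.1 + 1), by
        have := i.2
        apply List.ne_nil_of_length_pos
        simp only [List.length_take]
        omega⟩), by
    apply List.ne_nil_of_length_pos
    have := s.2
    simp only [List.length_map, List.length_finRange]
    exact List.length_pos_iff.mpr this⟩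

/-- `α : A → P_k A` is a coalgebra for the pebbling comonad. -/
def IsPebCoalg {σ : Signature} (k : ℕ) (A : Struct σ) (α : A.carrier → Peb A.carrier k) : Prop :=
  IsHom A (PebStruct k A) α ∧
  (∀ a, (lastP (α a)).2 = a) ∧
  (∀ (a : A.carrier) (i : ℕ) (h : i < (α a).1.length),
      (α ((α a).1.get ⟨i, h⟩).2).1 = (α a).1.take (i + 1))

/-- A `k`-pebble forest cover of a graph `(V, adj)`: a forest cover together with a
pebbling function `p : V → {1,…,k}` such that if `v ⌢ v'` with `v ≤ v'` then
`p v ≠ p w` for all `w` with `v < w ≤ v'`. -/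
structure PebbleForestCover (V : Type) (adj : V → V → Prop) (k : ℕ) where
  le : V → V → Prop
  le_refl : ∀ a, le a a
  le_antisymm : ∀ a b, le a b → le b a → a = b
  le_trans : ∀ a b c, le a b → le b c → le a c
  pred_chain : ∀ a b c, le b a → le c a → le b c ∨ le c b
  pred_finite : ∀ a, {b | le b a}.Finite
  cover : ∀ a b, adj a b → le a b ∨ le b a
  p : V → Fin k
  pebble : ∀ v v' w, adj v v' → le v v' → le v w → v ≠ w → le w v' → p v ≠ p w

/-- A tree decomposition of width ≤ w of a graph `(V, adj)`: a tree `(T, ≤)` with a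
labelling `λ : T → P(V)` such that every vertex occurs in some label, every edge is
contained in some label, the set of nodes containing a given vertex is path-closed, and
every label has at most `w + 1` elements. -/
structure TreeDecomp (V : Type) (adj : V → V → Prop) (w : ℕ) where
  T : Type
  le : T → T → Prop
  le_refl : ∀ a, le a a
  le_antisymm : ∀ a b, le a b → le b a → a = b
  le_trans : ∀ a b c, le a b → le b c → le a c
  pred_chain : ∀ a b c, le b a → le c a → le b c ∨ le c b
  pred_finite : ∀ a, {b | le b a}.Finite
  root : T
  root_le : ∀ x, le root x
  label : T → Set V
  td1 : ∀ v, ∃ x, v ∈ label x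
  td2 : ∀ v v', adj v v' → ∃ x, v ∈ label x ∧ v' ∈ label x
  td3 : ∀ (v : V) (x y z : T), v ∈ label x → v ∈ label y →
      (le z x ∨ le z y) → (∀ u, le u x → le u y → le u z) → v ∈ label z
  label_finite : ∀ x, (label x).Finite
  width : ∀ x, (label x).ncard ≤ w + 1

/-- The tree-width of a structure: the minimum width of a tree decomposition of its
Gaifman graph. -/
noncomputable def treeWidth {σ : Signature} (A : Struct σ) : ℕ :=
  sInf {w | Nonempty (TreeDecomp A.carrier (gaifman A) w)}

/-- The pebbling coalgebra number of a structure: the least `k` such that a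
`P_k`-coalgebra exists on `A`. -/
noncomputable def pebCoalgNumber {σ : Signature} (A : Struct σ) : ℕ :=
  sInf {k | ∃ α : A.carrier → Peb A.carrier k, IsPebCoalg k A α}


/-!
Both numbers are computed through `k`-pebble forest covers. For a coalgebra `α`, the prefix
order on the plays `α a` is a forest order on `A`, the pebble of `a` is the pebble of the last
move of `α a`, and the pebbling condition of `P_k A` says that a pebble placed on `a` is not
moved again before an adjacent `b ≥ a` is reached. Conversely, listing the chain below `v`
with its pebbles is a coalgebra. A `k`-pebble forest cover gives a tree decomposition of width
`k - 1` whose bag at `b` holds the elements whose pebble is still in place at `b`, and a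
decomposition of width `w` gives a `(w + 1)`-pebble forest cover: order the vertices by the
node nearest the root that contains them and pebble them greedily, since each vertex meets at
most `w` earlier vertices in the bag of that node.
-/

theorem Nat.sInf_eq_sInf_sub_one {S T : Set ℕ} (hST : ∀ n ∈ S, n + 1 ∈ T)
    (hTS : ∀ n ∈ T, n - 1 ∈ S) : sInf S = sInf T - 1 := by
  rcases S.eq_empty_or_nonempty with rfl | hS
  · have hT : T = ∅ := Set.eq_empty_of_forall_notMem fun n hn => hTS n hn
    simp [hT]
  · have hT : sInf S + 1 ∈ T := hST _ (Nat.sInf_mem hS)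
    have h₁ : sInf T ≤ sInf S + 1 := Nat.sInf_le hT
    have h₂ : sInf S ≤ sInf T - 1 := Nat.sInf_le (hTS _ (Nat.sInf_mem ⟨_, hT⟩))
    omega

namespace List

variable {β : Type*}

theorem getLast_mem_drop_of_prefix {s t u : List β} (hst : s <+: t) (hne : s ≠ t)
    (htu : t <+: u) (ht : t ≠ []) : t.getLast ht ∈ u.drop s.length := by
  have hlt : s.length < t.length :=
    lt_of_le_of_ne hst.length_le fun h => hne (hst.eq_of_length h)
  have hd : t.drop s.length ≠ [] := by simpa using hlt
  rw [← getLast_drop hd]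
  exact (htu.drop s.length).subset (getLast_mem hd)

theorem IsPrefix.eq_take_of_getLast_eq {l₁ l₂ : List β} (h : l₁ <+: l₂) (hnd : l₂.Nodup)
    (hne : l₁ ≠ []) {i : ℕ} (hi : i < l₂.length) (hlast : l₁.getLast hne = l₂[i]) :
    l₁ = l₂.take (i + 1) := by
  have hpos : 0 < l₁.length := length_pos_iff.2 hne
  rw [getLast_eq_getElem, h.getElem] at hlast
  have hlen : l₁.length = i + 1 := by
    have := hnd.getElem_inj_iff.1 hlast
    omega
  rw [← hlen]
  exact prefix_iff_eq_take.1 h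

theorem getLast_eq_of_pairwise {R : β → β → Prop} {l : List β} (hl : l.Pairwise R) {v : β}
    (hv : v ∈ l) (hmax : ∀ x ∈ l, ¬ R v x) (hne : l ≠ []) : l.getLast hne = v := by
  rw [← dropLast_append_getLast hne] at hl hv
  rcases mem_append.1 hv with hv | hv
  · exact absurd ((pairwise_append.1 hl).2.2 v hv _ (mem_singleton_self _))
      (hmax _ (getLast_mem hne))
  · exact (mem_singleton.1 hv).symm

theorem prefix_of_pairwise_lt {f : β → ℕ} {l₁ l₂ : List β}
    (h₁ : l₁.Pairwise (f · < f ·)) (h₂ : l₂.Pairwise (f · < f ·)) (hsub : l₁ ⊆ l₂)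
    (hdown : ∀ x ∈ l₂, ∀ y ∈ l₁, f x ≤ f y → x ∈ l₁) : l₁ <+: l₂ := by
  induction l₂ generalizing l₁ with
  | nil => simp [subset_nil.1 hsub]
  | cons a t ih =>
    rcases l₁ with _ | ⟨b, s⟩
    · exact nil_prefix
    have hat : ∀ x ∈ t, f a < f x := (pairwise_cons.1 h₂).1
    have hbs : ∀ x ∈ s, f b < f x := (pairwise_cons.1 h₁).1
    have hab : f a ≤ f b := by
      rcases mem_cons.1 (hsub mem_cons_self) with h | h
      · rw [h]
      · exact (hat b h).le
    obtain rfl : a = b := by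
      rcases mem_cons.1 (hdown a mem_cons_self b mem_cons_self hab) with h | h
      · exact h
      · exact absurd (hbs a h) (not_lt.2 hab)
    refine cons_prefix_cons.2 ⟨rfl, ih (pairwise_cons.1 h₁).2 (pairwise_cons.1 h₂).2 ?_ ?_⟩
    · intro x hx
      rcases mem_cons.1 (hsub (mem_cons_of_mem a hx)) with rfl | h
      · exact absurd (hbs x hx) (lt_irrefl _)
      · exact h
    · intro x hx y hy hxy
      rcases mem_cons.1 (hdown x (mem_cons_of_mem a hx) y (mem_cons_of_mem a hy) hxy) with rfl | h
      · exact absurd (hat x hx) (lt_irrefl _)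
      · exact h

end List

theorem exists_fin_coloring_of_wellFounded {V : Type*} {r : V → V → Prop} (hr : WellFounded r)
    {w : ℕ} (B : V → Set V) (hB : ∀ v, ∀ u ∈ B v, r u v) (hfin : ∀ v, (B v).Finite)
    (hcard : ∀ v, (B v).ncard ≤ w) :
    ∃ p : V → Fin (w + 1), ∀ v, ∀ u ∈ B v, p u ≠ p v := by
  have fresh : ∀ v (c : B v → Fin (w + 1)), ∃ x, x ∉ Set.range c := by
    intro v c
    have := (hfin v).to_subtype
    have hlt : (Set.range c).ncard < (Set.univ : Set (Fin (w + 1))).ncard := calc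
      (Set.range c).ncard ≤ Nat.card (B v) := Finite.card_range_le c
      _ = (B v).ncard := Nat.card_coe_set_eq _
      _ < w + 1 := Nat.lt_succ_of_le (hcard v)
      _ = (Set.univ : Set (Fin (w + 1))).ncard := by simp
    exact (Set.ne_univ_iff_exists_notMem _).1 (ne_of_apply_ne Set.ncard hlt.ne)
  let F : ∀ v, (∀ u, r u v → Fin (w + 1)) → Fin (w + 1) := fun v col =>
    (fresh v fun u => col u (hB v u u.2)).choose
  refine ⟨hr.fix F, fun v u hu heq => ?_⟩
  rw [hr.fix_eq F v] at heq
  exact (fresh v fun u => hr.fix F u).choose_spec ⟨⟨u, hu⟩, heq⟩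

theorem pebCond_self {X : Type} {k : ℕ} (s : List (Fin k × X)) : pebCond s s :=
  Or.inl ⟨List.prefix_refl s, by simp⟩

theorem pebCond.fst_getLast_ne {X : Type} {k : ℕ} {s t u : List (Fin k × X)}
    (hsu : pebCond s u) (hst : s <+: t) (hne : s ≠ t) (htu : t <+: u) (hs : s ≠ [])
    (ht : t ≠ []) : (s.getLast hs).1 ≠ (t.getLast ht).1 := by
  rcases hsu with ⟨-, hfresh⟩ | ⟨hus, -⟩
  · have h := hfresh _ (List.getLast_mem_drop_of_prefix hst hne htu ht)
    rw [List.getLast?_eq_some_getLast hs] at h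
    simpa using h
  · exact absurd (hst.eq_of_length (le_antisymm hst.length_le (htu.trans hus).length_le)) hne

theorem gaifman_symm {σ : Signature} {A : Struct σ} {a b : A.carrier} (h : gaifman A a b) :
    gaifman A b a := by
  obtain ⟨hne, r, x, i, j, hx, hi, hj, hij⟩ := h
  exact ⟨hne.symm, r, x, j, i, hx, hj, hi, hij.symm⟩

section Coalgebra

variable {σ : Signature} {A : Struct σ} {k : ℕ} {α : A.carrier → Peb A.carrier k}

theorem injective_val_of_counit (hcounit : ∀ a, (lastP (α a)).2 = a) :
    Function.Injective fun a => (α a).1 := by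
  intro a b h
  simpa [hcounit] using congrArg (fun s => (lastP s).2) (Subtype.ext h : α a = α b)

theorem pebCond_of_gaifman (hhom : IsHom A (PebStruct k A) α) {a b : A.carrier}
    (hab : gaifman A a b) : pebCond (α a).1 (α b).1 := by
  obtain ⟨-, r, x, i, j, hx, rfl, rfl, -⟩ := hab
  exact (hhom r x hx).1 i j

def PebbleForestCover.ofCoalg (α : A.carrier → Peb A.carrier k)
    (hhom : IsHom A (PebStruct k A) α) (hcounit : ∀ a, (lastP (α a)).2 = a) :
    PebbleForestCover A.carrier (gaifman A) k where
  le a b := (α a).1 <+: (α b).1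
  le_refl a := List.prefix_refl _
  le_antisymm _ _ h₁ h₂ :=
    injective_val_of_counit hcounit
      (h₁.eq_of_length (Nat.le_antisymm h₁.length_le h₂.length_le))
  le_trans _ _ _ := List.IsPrefix.trans
  pred_chain _ _ _ := List.prefix_or_prefix_of_prefix
  pred_finite a := by
    refine ((α a).1.inits.finite_toSet.preimage (injective_val_of_counit hcounit).injOn).subset ?_
    intro b hb
    simpa using hb
  cover _ _ hab := (pebCond_of_gaifman hhom hab).imp And.left And.left
  p a := (lastP (α a)).1
  pebble _ _ _ hadj h₁ h₂ hne h₃ := (pebCond_of_gaifman hhom hadj).fst_getLast_ne h₂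
    (fun h => hne (injective_val_of_counit hcounit h)) h₃ _ _

end Coalgebra

namespace WithBot

variable {α : Type*} [Preorder α]

theorem isChain_Iic (h : ∀ a : α, IsChain (· ≤ ·) (Set.Iic a)) (a : WithBot α) :
    IsChain (· ≤ ·) (Set.Iic a) := by
  intro b hb c hc hne
  induction b using WithBot.recBotCoe with
  | bot => exact Or.inl bot_le
  | coe b =>
  induction c using WithBot.recBotCoe with
  | bot => exact Or.inr bot_le
  | coe c =>
  induction a using WithBot.recBotCoe with
  | bot => exact absurd hb (not_coe_le_bot b)
  | coe a =>
  exact (h a (coe_le_coe.1 hb) (coe_le_coe.1 hc) (ne_of_apply_ne _ hne)).imp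
    coe_le_coe.2 coe_le_coe.2

theorem finite_Iic (h : ∀ a : α, (Set.Iic a).Finite) (a : WithBot α) : (Set.Iic a).Finite := by
  induction a using WithBot.recBotCoe with
  | bot => exact (Set.finite_singleton ⊥).subset fun b hb => WithBot.le_bot_iff.1 hb
  | coe a =>
  refine (((h a).image WithBot.some).insert ⊥).subset fun b hb => ?_
  induction b using WithBot.recBotCoe with
  | bot => exact Set.mem_insert _ _
  | coe b => exact Set.mem_insert_of_mem _ ⟨b, coe_le_coe.1 hb, rfl⟩

end WithBot

namespace PebbleForestCover

variable {V : Type} {adj : V → V → Prop} {k : ℕ}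

/-- The elements whose pebble is still on the board once the play has reached `b`. -/
def bag (F : PebbleForestCover V adj k) (b : V) : Set V :=
  {a | F.le a b ∧ ∀ w, F.le a w → a ≠ w → F.le w b → F.p a ≠ F.p w}

section

variable {F : PebbleForestCover V adj k}

theorem self_mem_bag (b : V) : b ∈ F.bag b :=
  ⟨F.le_refl b, fun _ h₁ h₂ h₃ => absurd (F.le_antisymm _ _ h₁ h₃) h₂⟩

theorem mem_bag_of_adj {a b : V} (hadj : adj a b) (hab : F.le a b) : a ∈ F.bag b :=
  ⟨hab, fun w => F.pebble a b w hadj hab⟩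

theorem mem_bag_of_le {a b c : V} (ha : a ∈ F.bag b) (hac : F.le a c) (hcb : F.le c b) :
    a ∈ F.bag c :=
  ⟨hac, fun w h₁ h₂ h₃ => ha.2 w h₁ h₂ (F.le_trans _ _ _ h₃ hcb)⟩

theorem bag_finite (b : V) : (F.bag b).Finite :=
  (F.pred_finite b).subset fun _ h => h.1

theorem ncard_bag_le (b : V) : (F.bag b).ncard ≤ k := by
  have hinj : Set.InjOn F.p (F.bag b) := by
    intro a₁ h₁ a₂ h₂ heq
    by_contra hne
    rcases F.pred_chain b a₁ a₂ h₁.1 h₂.1 with h | h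
    · exact h₁.2 a₂ h hne h₂.1 heq
    · exact h₂.2 a₁ h (Ne.symm hne) h₁.1 heq.symm
  simpa using Set.ncard_le_ncard_of_injOn F.p (fun a _ => Set.mem_univ (F.p a)) hinj

end

theorem nonempty_treeDecomp (F : PebbleForestCover V adj k) (hsymm : ∀ a b, adj a b → adj b a) :
    Nonempty (TreeDecomp V adj (k - 1)) := by
  let _ : PartialOrder V :=
    { le := F.le, le_refl := F.le_refl, le_trans := F.le_trans, le_antisymm := F.le_antisymm }
  refine ⟨{
    T := WithBot V
    le := (· ≤ ·)
    le_refl := _root_.le_refl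
    le_antisymm := fun _ _ => _root_.le_antisymm
    le_trans := fun _ _ _ => _root_.le_trans
    pred_chain := fun a _ _ hb hc =>
      (WithBot.isChain_Iic (fun a _ hb _ hc _ => F.pred_chain a _ _ hb hc) a).total hb hc
    pred_finite := WithBot.finite_Iic F.pred_finite
    root := ⊥
    root_le := fun _ => bot_le
    label := WithBot.recBotCoe (C := fun _ => Set V) ∅ F.bag
    td1 := fun v => ⟨v, self_mem_bag v⟩
    td2 := fun v v' hadj => (F.cover v v' hadj).elim
      (fun hle => ⟨v', mem_bag_of_adj hadj hle, self_mem_bag v'⟩)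
      (fun hle => ⟨v, self_mem_bag v, mem_bag_of_adj (hsymm v v' hadj) hle⟩)
    td3 := ?_
    label_finite := ?_
    width := ?_ }⟩
  · intro v x y z hx hy hz hmeet
    induction x using WithBot.recBotCoe with
    | bot => exact absurd hx (Set.notMem_empty v)
    | coe b =>
    induction y using WithBot.recBotCoe with
    | bot => exact absurd hy (Set.notMem_empty v)
    | coe b' =>
    have hvz : (v : WithBot V) ≤ z :=
      hmeet v (WithBot.coe_le_coe.2 hx.1) (WithBot.coe_le_coe.2 hy.1)
    induction z using WithBot.recBotCoe with
    | bot => exact absurd hvz (WithBot.not_coe_le_bot v)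
    | coe c =>
    rcases hz with h | h
    · exact mem_bag_of_le hx (WithBot.coe_le_coe.1 hvz) (WithBot.coe_le_coe.1 h)
    · exact mem_bag_of_le hy (WithBot.coe_le_coe.1 hvz) (WithBot.coe_le_coe.1 h)
  · intro x
    induction x using WithBot.recBotCoe with
    | bot => exact Set.finite_empty
    | coe b => exact bag_finite b
  · intro x
    induction x using WithBot.recBotCoe with
    | bot => simp
    | coe b => have := ncard_bag_le (F := F) b; simp only [WithBot.recBotCoe_coe]; omega

end PebbleForestCover

namespace TreeDecomp

variable {V : Type} {adj : V → V → Prop} {w : ℕ}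

abbrev toPartialOrder (D : TreeDecomp V adj w) : PartialOrder D.T where
  le := D.le
  le_refl := D.le_refl
  le_trans := D.le_trans
  le_antisymm := D.le_antisymm

attribute [local instance] toPartialOrder

section

variable (D : TreeDecomp V adj w)

theorem exists_greatest_of_le {x : D.T} {s : Set D.T} (hs : s.Nonempty)
    (hsx : ∀ u ∈ s, u ≤ x) :
    ∃ z ∈ s, ∀ u ∈ s, u ≤ z := by
  obtain ⟨z, hz⟩ := ((D.pred_finite x).subset hsx).exists_maximal hs
  refine ⟨z, hz.1, fun u hu => ?_⟩
  rcases D.pred_chain x u z (hsx u hu) (hsx z hz.1) with h | h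
  · exact h
  · exact hz.2 hu h

theorem exists_least_of_le {x : D.T} {s : Set D.T} (hs : s.Nonempty)
    (hsx : ∀ u ∈ s, u ≤ x) :
    ∃ z ∈ s, ∀ u ∈ s, z ≤ u := by
  obtain ⟨z, hz⟩ := ((D.pred_finite x).subset hsx).exists_minimal hs
  refine ⟨z, hz.1, fun u hu => ?_⟩
  rcases D.pred_chain x u z (hsx u hu) (hsx z hz.1) with h | h
  · exact hz.2 hu h
  · exact h

theorem exists_meet (x y : D.T) :
    ∃ z, z ≤ x ∧ z ≤ y ∧ ∀ u, u ≤ x → u ≤ y → u ≤ z := by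
  obtain ⟨z, hz, hmax⟩ := D.exists_greatest_of_le (s := {u | u ≤ x ∧ u ≤ y})
    ⟨D.root, D.root_le x, D.root_le y⟩ fun _ hu => hu.1
  exact ⟨z, hz.1, hz.2, fun u hux huy => hmax u ⟨hux, huy⟩⟩

theorem mem_label_of_le_of_le {v : V} {x y t : D.T} (hx : v ∈ D.label x) (ht : v ∈ D.label t)
    (hxy : x ≤ y) (hyt : y ≤ t) : v ∈ D.label y :=
  D.td3 v t x y ht hx (Or.inl hyt) fun _ _ hux => _root_.le_trans hux hxy

theorem exists_least_mem_label (v : V) :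
    ∃ t, v ∈ D.label t ∧ ∀ y, v ∈ D.label y → t ≤ y := by
  obtain ⟨x, hx⟩ := D.td1 v
  obtain ⟨t, ht, hmin⟩ := D.exists_least_of_le (s := {z | z ≤ x ∧ v ∈ D.label z})
    ⟨x, le_rfl, hx⟩ fun _ hz => hz.1
  refine ⟨t, ht.2, fun y hy => ?_⟩
  obtain ⟨z, hzx, hzy, hmeet⟩ := D.exists_meet x y
  have hvz : v ∈ D.label z := D.td3 v x y z hx hy (Or.inl hzx) hmeet
  exact (hmin z ⟨hzx, hvz⟩).trans hzy

end

theorem nonempty_pebbleForestCover [Finite V] (D : TreeDecomp V adj w) :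
    Nonempty (PebbleForestCover V adj (w + 1)) := by
  choose m hm_mem hm_le using D.exists_least_mem_label
  obtain ⟨n, ⟨e⟩⟩ := Finite.exists_equiv_fin V
  let key : V → D.T ×ₗ Fin n := fun v => toLex (m v, e v)
  have hkey : Function.Injective key := fun a b h => e.injective (congrArg (·.2) h)
  let _ : PartialOrder V := PartialOrder.lift key hkey
  have hm_mono : ∀ {a b : V}, a ≤ b → m a ≤ m b := fun h =>
    (Prod.Lex.le_iff.1 h).elim le_of_lt fun h => h.1.le
  have hcomp : ∀ {a b : V}, m a ≤ m b ∨ m b ≤ m a → a ≤ b ∨ b ≤ a := by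
    intro a b h
    rcases eq_or_ne (m a) (m b) with hab | hab
    · exact (le_total (e a) (e b)).imp (fun h => Prod.Lex.le_iff.2 (Or.inr ⟨hab, h⟩))
        fun h => Prod.Lex.le_iff.2 (Or.inr ⟨hab.symm, h⟩)
    · exact h.imp (fun h => Prod.Lex.le_iff.2 (Or.inl (lt_of_le_of_ne h hab)))
        fun h => Prod.Lex.le_iff.2 (Or.inl (lt_of_le_of_ne h hab.symm))
  have hcard : ∀ v, {u | u < v ∧ u ∈ D.label (m v)}.ncard ≤ w := fun v => calc
    _ ≤ (D.label (m v) \ {v}).ncard :=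
      Set.ncard_le_ncard (fun u hu => ⟨hu.2, hu.1.ne⟩) (D.label_finite _).sdiff
    _ = (D.label (m v)).ncard - 1 := Set.ncard_sdiff_singleton_of_mem (hm_mem v)
    _ ≤ w := by have := D.width (m v); omega
  obtain ⟨p, hp⟩ := exists_fin_coloring_of_wellFounded wellFounded_lt _
    (fun _ _ hu => hu.1) (fun _ => Set.toFinite _) hcard
  refine ⟨{
    le := (· ≤ ·)
    le_refl := _root_.le_refl
    le_antisymm := fun _ _ => _root_.le_antisymm
    le_trans := fun _ _ _ => _root_.le_trans
    pred_chain := fun c _ _ ha hb => hcomp (D.pred_chain (m c) _ _ (hm_mono ha) (hm_mono hb))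
    pred_finite := fun _ => Set.toFinite _
    cover := fun a b hadj => ?_
    p := p
    pebble := fun a b x hadj hab hax hne hxb => ?_ }⟩
  · obtain ⟨t, hat, hbt⟩ := D.td2 a b hadj
    exact hcomp (D.pred_chain t _ _ (hm_le a t hat) (hm_le b t hbt))
  · obtain ⟨t, hat, hbt⟩ := D.td2 a b hadj
    have hax' : a ∈ D.label (m x) := D.mem_label_of_le_of_le (hm_mem a) hat (hm_mono hax)
      ((hm_mono hxb).trans (hm_le b t hbt))
    exact hp x a ⟨lt_of_le_of_ne hax hne, hax'⟩

end TreeDecomp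

namespace PebbleForestCover

variable {V : Type} {adj : V → V → Prop} {k : ℕ}

noncomputable def height (F : PebbleForestCover V adj k) (v : V) : ℕ :=
  {b | F.le b v}.ncard

noncomputable def chain (F : PebbleForestCover V adj k) (v : V) : List V :=
  (F.pred_finite v).toFinset.toList.insertionSort (F.height · ≤ F.height ·)

variable {F : PebbleForestCover V adj k}

theorem height_le_height {a b : V} (hab : F.le a b) : F.height a ≤ F.height b :=
  Set.ncard_le_ncard (fun _ hc => F.le_trans _ _ _ hc hab) (F.pred_finite b)

theorem height_lt_height {a b : V} (hab : F.le a b) (hne : a ≠ b) : F.height a < F.height b :=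
  Set.ncard_lt_ncard ⟨fun _ hc => F.le_trans _ _ _ hc hab,
    fun h => hne (F.le_antisymm _ _ hab (h (F.le_refl b)))⟩ (F.pred_finite b)

theorem mem_chain {x v : V} : x ∈ F.chain v ↔ F.le x v := by
  simp [chain, (List.perm_insertionSort _ _).mem_iff]

theorem chain_ne_nil (v : V) : F.chain v ≠ [] :=
  List.ne_nil_of_mem (mem_chain.2 (F.le_refl v))

theorem pairwise_chain (v : V) : (F.chain v).Pairwise (F.height · < F.height ·) := by
  have : Std.Total (F.height · ≤ F.height · : V → V → Prop) := ⟨fun _ _ => le_total _ _⟩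
  have : IsTrans V (F.height · ≤ F.height ·) := ⟨fun _ _ _ => _root_.le_trans⟩
  have hnd : (F.chain v).Nodup :=
    (List.perm_insertionSort _ _).nodup_iff.2 (Finset.nodup_toList _)
  refine ((List.pairwise_insertionSort _ _).and hnd).imp_of_mem fun ha hb ⟨hle, hne⟩ => ?_
  rcases F.pred_chain v _ _ (mem_chain.1 ha) (mem_chain.1 hb) with h | h
  · exact height_lt_height h hne
  · exact absurd hle (not_le.2 (height_lt_height h hne.symm))

theorem nodup_chain (v : V) : (F.chain v).Nodup :=
  (pairwise_chain v).imp fun h => ne_of_apply_ne F.height h.ne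

theorem getLast_chain (v : V) : (F.chain v).getLast (chain_ne_nil v) = v :=
  List.getLast_eq_of_pairwise (pairwise_chain v) (mem_chain.2 (F.le_refl v))
    (fun _ hx => not_lt.2 (height_le_height (mem_chain.1 hx))) _

theorem chain_prefix_chain {u v : V} (huv : F.le u v) : F.chain u <+: F.chain v := by
  refine List.prefix_of_pairwise_lt (pairwise_chain u) (pairwise_chain v)
    (fun x hx => mem_chain.2 (F.le_trans _ _ _ (mem_chain.1 hx) huv)) fun x hx y hy hxy => ?_
  rcases F.pred_chain v x y (mem_chain.1 hx) (F.le_trans _ _ _ (mem_chain.1 hy) huv) with h | h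
  · exact mem_chain.2 (F.le_trans _ _ _ h (mem_chain.1 hy))
  · rcases eq_or_ne y x with rfl | hne
    · exact hy
    · exact absurd hxy (not_le.2 (height_lt_height h hne))

theorem chain_getElem {v : V} {i : ℕ} (hi : i < (F.chain v).length) :
    F.chain (F.chain v)[i] = (F.chain v).take (i + 1) :=
  (chain_prefix_chain (mem_chain.1 (List.getElem_mem hi))).eq_take_of_getLast_eq (nodup_chain v)
    (chain_ne_nil _) hi (getLast_chain _)

theorem mem_drop_chain {a b x : V} (hab : F.le a b)
    (hx : x ∈ (F.chain b).drop (F.chain a).length) : F.le a x ∧ a ≠ x ∧ F.le x b := by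
  have hxb : F.le x b := mem_chain.1 (List.mem_of_mem_drop hx)
  have hxa : x ∉ F.chain a := by
    rw [List.prefix_iff_eq_take.1 (chain_prefix_chain hab)]
    exact fun h => List.disjoint_take_drop (nodup_chain b) le_rfl h hx
  rcases F.pred_chain b a x hab hxb with h | h
  · exact ⟨h, fun e => hxa (e ▸ mem_chain.2 (F.le_refl a)), hxb⟩
  · exact absurd (mem_chain.2 h) hxa

variable (F)

noncomputable def play (v : V) : Peb V k :=
  ⟨(F.chain v).map fun u => (F.p u, u), by simpa using chain_ne_nil v⟩

variable {F}

theorem lastP_play (v : V) : lastP (F.play v) = (F.p v, v) := by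
  simp [lastP, play, List.getLast_map, getLast_chain]

theorem pebCond_play_of_le {a b : V} (hadj : adj a b) (hab : F.le a b) :
    pebCond (F.play a).1 (F.play b).1 := by
  refine Or.inl ⟨(chain_prefix_chain hab).map _, fun mv hmv => ?_⟩
  simp only [play, List.length_map, ← List.map_drop, List.mem_map] at hmv
  obtain ⟨x, hx, rfl⟩ := hmv
  obtain ⟨hax, hne, hxb⟩ := mem_drop_chain hab hx
  have hlast : (F.play a).1.getLast (F.play a).2 = (F.p a, a) := lastP_play a
  rw [List.getLast?_eq_some_getLast (F.play a).2, hlast]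
  simpa using F.pebble a b x hadj hab hax hne hxb

end PebbleForestCover

theorem PebbleForestCover.isPebCoalg_play {σ : Signature} {A : Struct σ} {k : ℕ}
    (F : PebbleForestCover A.carrier (gaifman A) k) : IsPebCoalg k A F.play := by
  refine ⟨fun r x hx => ⟨fun i j => ?_, by simpa [lastP_play] using hx⟩,
    fun a => by simp [lastP_play], fun a i hi => ?_⟩
  · change pebCond (F.play (x i)).1 (F.play (x j)).1
    rcases eq_or_ne (x i) (x j) with h | hne
    · rw [h]
      exact pebCond_self _
    · have hadj : gaifman A (x i) (x j) :=
        ⟨hne, r, x, i, j, hx, rfl, rfl, fun h => hne (congrArg x h)⟩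
      rcases F.cover _ _ hadj with h | h
      · exact pebCond_play_of_le hadj h
      · exact Or.symm (pebCond_play_of_le (gaifman_symm hadj) h)
  · simp [play, chain_getElem, List.map_take]

theorem treeWidth_eq_pebCoalgNumber_sub_one_general
    (σ : Signature) (A : Struct σ) [Fintype A.carrier] :
    treeWidth A = pebCoalgNumber A - 1 := by
  refine Nat.sInf_eq_sInf_sub_one (fun w ⟨D⟩ => ?_) (fun k ⟨α, hhom, hcounit, _⟩ => ?_)
  · obtain ⟨F⟩ := D.nonempty_pebbleForestCover
    exact ⟨F.play, F.isPebCoalg_play⟩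
  · exact (PebbleForestCover.ofCoalg α hhom hcounit).nonempty_treeDecomp
      fun _ _ => gaifman_symm

/-- For every finite (nonempty) structure `A`, the tree-width of `A`
equals the pebbling coalgebra number of `A` minus 1. -/
theorem treeWidth_eq_pebCoalgNumber_sub_one
    (σ : Signature) (A : Struct σ) [Fintype A.carrier] [Nonempty A.carrier] :
    treeWidth A = pebCoalgNumber A - 1 :=
  treeWidth_eq_pebCoalgNumber_sub_one_general σ A
end

section
/- Let C_k be an indexed comonad on σ-structures (in co-Kleisli form) and W_{A,B} ⊆ C_k A × C_k B a set of winning positions, with C_k A carrying a tree structure (each non-root element s' has a unique immediate predecessor s, written s' ≻ s). Define S(A,B) as the set of functions f : C_k A → B such that (s, f*(s)) ∈ W_{A,B} for all s. Then: a pair (F,G) with F ⊆ S(A,B), G ⊆ S(B,A) is locally invertible (i.e., ∀f∈F, s. ∃g∈G. g* f* s = s, and ∀g∈G, t. ∃f∈F. f* g* t = t) with F nonempty, if and only if Duplicator has a winning strategy in the k-round back-and-forth C_k game between A and B (positions are pairs (s,t); from (s,t), Spoiler extends one coordinate by an immediate successor and Duplicator the other; Duplicator wins if after k rounds the position lies in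 W_{A,B}), provided W is compatible with the coextension operation as in the EF comonad. -/
/-- Winning positions for the EF back-and-forth game: a pair of equal-length sequences
whose induced relation is a partial isomorphism (single-valued and injective, and
preserving and reflecting all relations). -/
def Wpos {σ : Signature} (A B : Struct σ) (s : List A.carrier) (t : List B.carrier) : Prop :=
  ∃ h : s.length = t.length,
    (∀ i j : Fin s.length, s.get i = s.get j ↔ t.get (Fin.cast h i) = t.get (Fin.cast h j)) ∧
    (∀ (r : σ.symbols) (x : Fin (σ.arity r) → Fin s.length),
      A.rel r (fun i => s.get (x i)) ↔ B.rel r (fun i => t.get (Fin.cast h (x i))))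

/-- Duplicator wins the `n`-round back-and-forth game from position `(s, t)`:
in each round Spoiler extends one of the two sequences by an immediate successor
(i.e. appends one element) and Duplicator extends the other; after `n` rounds the
position must be a winning position. -/
def DWin {σ : Signature} (A B : Struct σ) : ℕ → List A.carrier → List B.carrier → Prop
  | 0, s, t => Wpos A B s t
  | n + 1, s, t => (∀ a, ∃ b, DWin A B n (s ++ [a]) (t ++ [b])) ∧
      (∀ b, ∃ a, DWin A B n (s ++ [a]) (t ++ [b]))

/-- `S(A,B)`: the set of functions `f : E_k A → B` such that every position
`(s, f*(s))` is winning. -/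
def Sset {σ : Signature} (k : ℕ) (A B : Struct σ) : Set (NESeq A.carrier k → B.carrier) :=
  {f | ∀ s : NESeq A.carrier k, Wpos A B s.1 (coext f s).1}

/-!
If `(F, G)` is locally invertible, Duplicator can keep every position of the form `(s, f* s)`
with `f ∈ F`, which is a partial isomorphism since `F ⊆ S(A,B)`. She answers a move extending `s`
to `s'` by the last entry of `f* s'`; for a move extending `t = f* s` to `t'` she picks `g ∈ G`
with `g* t = s` and answers by the last entry of `g* t'`, and local invertibility turns
`(g* t', t')` back into a position `(s', f'* s')`.

Conversely, given a winning strategy, take for `F` (and symmetrically `G`) all `f` such that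
Duplicator still wins the remaining rounds from every `(s, f* s)`. An inverse of `f*` at `s` is a
function `g` that answers the prefixes of `f* s` by the corresponding prefixes of `s` and follows
the strategy once Spoiler leaves this branch; it lies in `G` because every prefix of `(s, f* s)`
is a winning position.
-/

namespace NESeq

variable {A : Type} {k : ℕ}

def take (s : NESeq A k) (m : ℕ) (hm : 0 < m) : NESeq A k :=
  ⟨s.1.take m, by simp [s.2.1]; omega, (List.length_take_le' m s.1).trans s.2.2⟩

def snoc (s : NESeq A k) (a : A) (hs : s.1.length < k) : NESeq A k :=
  ⟨s.1 ++ [a], by simp, by simpa using hs⟩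

def singleton (a : A) (hk : 0 < k) : NESeq A k :=
  ⟨[a], by simp, hk⟩

end NESeq

section Coext

variable {A B : Type} {k : ℕ} (f : NESeq A k → B)

@[simp]
lemma length_coext (s : NESeq A k) : (coext f s).1.length = s.1.length := by
  simp [coext]

lemma getElem_coext (s : NESeq A k) (i : ℕ) (hi : i < (coext f s).1.length) :
    (coext f s).1[i] = f (s.take (i + 1) i.succ_pos) := by
  simp [coext, NESeq.take]

lemma coext_take (s : NESeq A k) (m : ℕ) (hm : 0 < m) :
    (coext f (s.take m hm)).1 = (coext f s).1.take m := by
  refine List.ext_getElem (by rw [length_coext]; simp [NESeq.take]) fun i hi _ => ?_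
  rw [length_coext] at hi
  simp only [getElem_coext, List.getElem_take]
  congr 1
  apply Subtype.ext
  simp only [NESeq.take, List.take_take, List.length_take] at hi ⊢
  congr 1
  omega

lemma coext_snoc (s : NESeq A k) (a : A) (hs : s.1.length < k) :
    (coext f (s.snoc a hs)).1 = (coext f s).1 ++ [f (s.snoc a hs)] := by
  refine List.ext_getElem (by rw [length_coext]; simp [NESeq.snoc]) fun i hi _ => ?_
  rw [length_coext] at hi
  simp only [NESeq.snoc, List.length_append, List.length_singleton] at hi
  rw [getElem_coext, List.getElem_append]
  split_ifs with h
  · rw [getElem_coext]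
    congr 1
    apply Subtype.ext
    have hi : i + 1 ≤ s.1.length := by simpa using h
    simp [NESeq.take, NESeq.snoc, List.take_append_of_le_length hi]
  · have hi : i = s.1.length := by simp at h; omega
    subst hi
    simp only [length_coext, Nat.sub_self, List.getElem_singleton]
    congr 1
    apply Subtype.ext
    simp [NESeq.take, NESeq.snoc]

lemma coext_singleton (a : A) (hk : 0 < k) :
    (coext f (NESeq.singleton a hk)).1 = [f (NESeq.singleton a hk)] := by
  simp [coext, NESeq.singleton, List.finRange_succ]

end Coext

section Game

variable {σ : Signature} {A B : Struct σ}

lemma Wpos.symm {s : List A.carrier} {t : List B.carrier} (h : Wpos A B s t) : Wpos B A t s := by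
  obtain ⟨hl, hiso, hrel⟩ := h
  refine ⟨hl.symm, fun i j => ?_, fun r x => ?_⟩
  · simpa using (hiso (i.cast hl.symm) (j.cast hl.symm)).symm
  · simpa using (hrel r fun i => (x i).cast hl.symm).symm

lemma Wpos.take {s : List A.carrier} {t : List B.carrier} (h : Wpos A B s t) (m : ℕ) :
    Wpos A B (s.take m) (t.take m) := by
  obtain ⟨hl, hiso, hrel⟩ := h
  have hm : (s.take m).length ≤ s.length := List.length_take_le' m s
  refine ⟨by simp [hl], fun i j => ?_, fun r x => ?_⟩
  · simpa using hiso (i.castLE hm) (j.castLE hm)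
  · simpa using hrel r fun i => (x i).castLE hm

lemma DWin.symm : ∀ {n : ℕ} {s : List A.carrier} {t : List B.carrier},
    DWin A B n s t → DWin B A n t s
  | 0, _, _, h => Wpos.symm h
  | _ + 1, _, _, h =>
    ⟨fun b => (h.2 b).imp fun _ => DWin.symm, fun a => (h.1 a).imp fun _ => DWin.symm⟩

lemma DWin.wpos [Nonempty A.carrier] : ∀ {n : ℕ} {s : List A.carrier} {t : List B.carrier},
    DWin A B n s t → Wpos A B s t
  | 0, _, _, h => h
  | _ + 1, s, t, h => by
    obtain ⟨b, hb⟩ := h.1 (Classical.arbitrary _)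
    have hw := hb.wpos
    have hl : s.length = t.length := by simpa using hw.1
    simpa [hl] using hw.take s.length

lemma DWin.nonempty_right [Nonempty A.carrier] {n : ℕ} {s : List A.carrier} {t : List B.carrier}
    (h : DWin A B (n + 1) s t) : Nonempty B.carrier :=
  ⟨(h.1 (Classical.arbitrary _)).choose⟩

end Game

section Replies

variable {A B : Type} (φ : List A → List B → A → B)

-- `replies φ l` answers the moves of `l` one at a time, `φ` seeing the earlier moves and answers;
-- it is computed on the reversed history so that the recursion is structural.
def repliesRev : List A → List B
  | [] => []
  | a :: r => φ r.reverse (repliesRev r).reverse a :: repliesRev r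

def replies (l : List A) : List B :=
  (repliesRev φ l.reverse).reverse

@[simp]
lemma replies_nil : replies φ [] = [] := rfl

@[simp]
lemma replies_concat (l : List A) (a : A) :
    replies φ (l ++ [a]) = replies φ l ++ [φ l (replies φ l) a] := by
  simp [replies, repliesRev]

@[simp]
lemma length_replies (l : List A) : (replies φ l).length = l.length := by
  induction l using List.reverseRecOn <;> simp [*]

lemma replies_take (l : List A) (m : ℕ) : replies φ (l.take m) = (replies φ l).take m := by
  induction l using List.reverseRecOn with
  | nil => simp
  | append_singleton l a ih =>
    rcases le_or_gt m l.length with hm | hm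
    · rw [List.take_append_of_le_length hm, replies_concat,
        List.take_append_of_le_length (by simpa using hm), ih]
    · rw [List.take_of_length_le (by simp; omega), List.take_of_length_le (by simp; omega)]

lemma coext_getLast_replies {k : ℕ} (s : NESeq A k) :
    (coext (fun s => (replies φ s.1).getLast
      (by rw [← List.length_pos_iff, length_replies, List.length_pos_iff]; exact s.2.1)) s).1 =
      replies φ s.1 := by
  refine List.ext_getElem (by simp) fun i hi _ => ?_
  rw [getElem_coext, List.getLast_eq_getElem]
  simp only [NESeq.take, replies_take, List.getElem_take]
  congr 1
  simp at hi ⊢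
  omega

end Replies

lemma exists_forall_coext_of_invariant {A B : Type} [Nonempty B] {k : ℕ}
    (P : List A → List B → Prop) (h0 : P [] [])
    (hstep : ∀ s t, s.length < k → P s t → ∀ a, ∃ b, P (s ++ [a]) (t ++ [b])) :
    ∃ g : NESeq A k → B, ∀ s, P s.1 (coext g s).1 := by
  let φ (s : List A) (t : List B) (a : A) : B := Classical.epsilon fun b => P (s ++ [a]) (t ++ [b])
  have hφ : ∀ s : List A, s.length ≤ k → P s (replies φ s) := by
    intro s
    induction s using List.reverseRecOn with
    | nil => simpa using h0
    | append_singleton s a ih =>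
      intro hs
      simp only [List.length_append, List.length_singleton] at hs
      rw [replies_concat]
      exact Classical.epsilon_spec (hstep s _ (by omega) (ih (by omega)) a)
  exact ⟨_, fun s => (coext_getLast_replies φ s).symm ▸ hφ s.1 s.2.2⟩

def strategySet {σ : Signature} (k : ℕ) (A B : Struct σ) :
    Set (NESeq A.carrier k → B.carrier) :=
  {f | ∀ s : NESeq A.carrier k, DWin A B (k - s.1.length) s.1 (coext f s).1}

def LocallyInvertible {σ : Signature} {k : ℕ} {A B : Struct σ}
    (F : Set (NESeq A.carrier k → B.carrier)) (G : Set (NESeq B.carrier k → A.carrier)) :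
    Prop :=
  (∀ f ∈ F, ∀ s : NESeq A.carrier k, ∃ g ∈ G, coext g (coext f s) = s) ∧
    (∀ g ∈ G, ∀ t : NESeq B.carrier k, ∃ f ∈ F, coext f (coext g t) = t)

section Strategies

variable {σ : Signature} {k : ℕ} {A B : Struct σ}

lemma DWin.exists_concat {s : List A.carrier} {t : List B.carrier}
    (h : DWin A B (k - s.length) s t) (hs : s.length < k) (a : A.carrier) :
    ∃ b, DWin A B (k - (s ++ [a]).length) (s ++ [a]) (t ++ [b]) := by
  obtain ⟨n, hn⟩ : ∃ n, k - s.length = n + 1 := ⟨k - s.length - 1, by omega⟩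
  rw [hn] at h
  simpa [show k - (s.length + 1) = n by omega] using h.1 a

lemma strategySet_subset_Sset [Nonempty A.carrier] : strategySet k A B ⊆ Sset k A B :=
  fun _ hf s => (hf s).wpos

lemma strategySet_nonempty [Nonempty B.carrier] (hw : DWin A B k [] []) :
    (strategySet k A B).Nonempty :=
  exists_forall_coext_of_invariant (fun s t => DWin A B (k - s.length) s t) hw
    fun _ _ hs h => h.exists_concat hs

lemma dwin_take_of_mem_strategySet (hw : DWin A B k [] []) {f : NESeq A.carrier k → B.carrier}
    (hf : f ∈ strategySet k A B) (s : NESeq A.carrier k) {i : ℕ} (hi : i ≤ s.1.length) :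
    DWin A B (k - i) (s.1.take i) ((coext f s).1.take i) := by
  rcases Nat.eq_zero_or_pos i with rfl | hpos
  · simpa using hw
  · have h := hf (s.take i hpos)
    rw [coext_take] at h
    simpa [NESeq.take, hi] using h

lemma exists_mem_strategySet_coext_eq [Nonempty B.carrier] (s₀ : NESeq A.carrier k)
    (t₀ : List B.carrier) (hlen : t₀.length = s₀.1.length)
    (hwin : ∀ i ≤ s₀.1.length, DWin A B (k - i) (s₀.1.take i) (t₀.take i)) :
    ∃ g ∈ strategySet k A B, (coext g s₀).1 = t₀ := by
  let P (s : List A.carrier) (t : List B.carrier) : Prop :=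
    DWin A B (k - s.length) s t ∧ (s <+: s₀.1 → t = t₀.take s.length)
  have hstep : ∀ s t, s.length < k → P s t → ∀ a, ∃ b, P (s ++ [a]) (t ++ [b]) := by
    rintro s t hs ⟨hst, hpre⟩ a
    by_cases hsa : s ++ [a] <+: s₀.1
    · have hlt : s.length < t₀.length := by simpa [hlen] using hsa.length_le
      have ht : t ++ [t₀[s.length]] = t₀.take (s ++ [a]).length := by
        rw [hpre ((List.prefix_append s [a]).trans hsa), List.take_concat_get']
        simp
      refine ⟨t₀[s.length], ?_, fun _ => ht⟩
      have h := hwin _ hsa.length_le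
      rwa [← List.prefix_iff_eq_take.mp hsa, ← ht] at h
    · obtain ⟨b, hb⟩ := hst.exists_concat hs a
      exact ⟨b, hb, fun h => absurd h hsa⟩
  obtain ⟨g, hg⟩ := exists_forall_coext_of_invariant P
    ⟨by simpa using hwin 0 (Nat.zero_le _), fun _ => by simp⟩ hstep
  refine ⟨g, fun s => (hg s).1, ?_⟩
  rw [(hg s₀).2 List.prefix_rfl, ← hlen, List.take_length]

lemma exists_mem_strategySet_coext_coext_eq [Nonempty A.carrier] (hw : DWin A B k [] [])
    {f : NESeq A.carrier k → B.carrier} (hf : f ∈ strategySet k A B) (s : NESeq A.carrier k) :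
    ∃ g ∈ strategySet k B A, coext g (coext f s) = s := by
  obtain ⟨g, hg, hgs⟩ := exists_mem_strategySet_coext_eq (coext f s) s.1 (by simp)
    fun i hi => (dwin_take_of_mem_strategySet hw hf s (by simpa using hi)).symm
  exact ⟨g, hg, Subtype.ext hgs⟩

lemma locallyInvertible_strategySet [Nonempty A.carrier] [Nonempty B.carrier]
    (hw : DWin A B k [] []) :
    LocallyInvertible (strategySet k A B) (strategySet k B A) :=
  ⟨fun _ hf => exists_mem_strategySet_coext_coext_eq hw hf,
    fun _ hg => exists_mem_strategySet_coext_coext_eq hw.symm hg⟩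

end Strategies

namespace LocallyInvertible

variable {σ : Signature} {k : ℕ} {A B : Struct σ} {F : Set (NESeq A.carrier k → B.carrier)}
  {G : Set (NESeq B.carrier k → A.carrier)}

lemma exists_coext_eq_of_coext_eq (hFG : LocallyInvertible F G)
    {g : NESeq B.carrier k → A.carrier} (hg : g ∈ G) {s : NESeq A.carrier k}
    {t : NESeq B.carrier k} (hgt : coext g t = s) :
    ∃ f ∈ F, coext f s = t := by
  subst hgt
  exact hFG.2 g hg t

lemma dwin (hFG : LocallyInvertible F G) (hF : F ⊆ Sset k A B) :
    ∀ (n : ℕ) (s : NESeq A.carrier k) (t : NESeq B.carrier k), s.1.length + n ≤ k →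
      (∃ f ∈ F, coext f s = t) → DWin A B n s.1 t.1
  | 0, s, _, _, ⟨f, hf, hfs⟩ => hfs ▸ hF hf s
  | n + 1, s, t, hs, ⟨f, hf, hfs⟩ => by
    have hsk : s.1.length < k := by omega
    have htk : t.1.length < k := by rw [← hfs, length_coext]; exact hsk
    refine ⟨fun a => ⟨f (s.snoc a hsk), ?_⟩, fun b => ?_⟩
    · have hft : coext f (s.snoc a hsk) = t.snoc (f (s.snoc a hsk)) htk :=
        Subtype.ext (by rw [coext_snoc, hfs]; rfl)
      exact hFG.dwin hF n _ _ (by simp [NESeq.snoc]; omega) ⟨f, hf, hft⟩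
    · obtain ⟨g, hg, hgt⟩ := hFG.1 f hf s
      rw [hfs] at hgt
      refine ⟨g (t.snoc b htk), ?_⟩
      have hgt' : coext g (t.snoc b htk) = s.snoc (g (t.snoc b htk)) hsk :=
        Subtype.ext (by rw [coext_snoc, hgt]; rfl)
      exact hFG.dwin hF n _ _ (by simp [NESeq.snoc]; omega)
        (hFG.exists_coext_eq_of_coext_eq hg hgt')

lemma dwin_nil [Nonempty A.carrier] (hFG : LocallyInvertible F G) (hk : 0 < k)
    (hF₀ : F.Nonempty) (hF : F ⊆ Sset k A B) : DWin A B k [] [] := by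
  obtain ⟨n, rfl⟩ : ∃ n, k = n + 1 := ⟨k - 1, by omega⟩
  obtain ⟨f, hf⟩ := hF₀
  obtain ⟨g, hg, -⟩ := hFG.1 f hf (NESeq.singleton (Classical.arbitrary _) hk)
  refine ⟨fun a => ⟨f (NESeq.singleton a hk), ?_⟩,
    fun b => ⟨g (NESeq.singleton b hk), ?_⟩⟩
  · exact hFG.dwin hF n (NESeq.singleton a hk) (NESeq.singleton _ hk)
      (by simp [NESeq.singleton]; omega) ⟨f, hf, Subtype.ext (coext_singleton f a hk)⟩
  · exact hFG.dwin hF n (NESeq.singleton _ hk) (NESeq.singleton b hk)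
      (by simp [NESeq.singleton]; omega)
      (hFG.exists_coext_eq_of_coext_eq hg (Subtype.ext (coext_singleton g b hk)))

end LocallyInvertible

theorem locallyInvertiblePair_iff_backAndForth_general
    (σ : Signature) (k : ℕ) (hk : 0 < k) (A B : Struct σ)
    [Nonempty A.carrier] :
    (∃ (F : Set (NESeq A.carrier k → B.carrier)) (G : Set (NESeq B.carrier k → A.carrier)),
      F.Nonempty ∧ F ⊆ Sset k A B ∧ G ⊆ Sset k B A ∧
      (∀ f ∈ F, ∀ s : NESeq A.carrier k, ∃ g ∈ G, coext g (coext f s) = s) ∧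
      (∀ g ∈ G, ∀ t : NESeq B.carrier k, ∃ f ∈ F, coext f (coext g t) = t)) ↔
    DWin A B k [] [] := by
  constructor
  · rintro ⟨F, G, hF₀, hF, -, hFG⟩
    exact LocallyInvertible.dwin_nil hFG hk hF₀ hF
  · intro hw
    have : Nonempty B.carrier := by
      obtain ⟨n, rfl⟩ : ∃ n, k = n + 1 := ⟨k - 1, by omega⟩
      exact hw.nonempty_right
    exact ⟨strategySet k A B, strategySet k B A, strategySet_nonempty hw,
      strategySet_subset_Sset, strategySet_subset_Sset, locallyInvertible_strategySet hw⟩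

/-- For the EF comonad `E_k` with winning positions given by partial
isomorphisms, there is a nonempty locally invertible pair `(F, G)` with `F ⊆ S(A,B)`,
`G ⊆ S(B,A)` iff Duplicator has a winning strategy in the `k`-round back-and-forth
game between `A` and `B`. -/
theorem locallyInvertiblePair_iff_backAndForth
    (σ : Signature) (k : ℕ) (hk : 0 < k) (A B : Struct σ)
    [Nonempty A.carrier] [Nonempty B.carrier] :
    (∃ (F : Set (NESeq A.carrier k → B.carrier)) (G : Set (NESeq B.carrier k → A.carrier)),
      F.Nonempty ∧ F ⊆ Sset k A B ∧ G ⊆ Sset k B A ∧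
      (∀ f ∈ F, ∀ s : NESeq A.carrier k, ∃ g ∈ G, coext g (coext f s) = s) ∧
      (∀ g ∈ G, ∀ t : NESeq B.carrier k, ∃ f ∈ F, coext f (coext g t) = t)) ↔
    DWin A B k [] [] :=
  locallyInvertiblePair_iff_backAndForth_general σ k hk A B
end
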